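/- arXiv:math/0606684 — 4 statements merged into one kernel-verified Lean document; each statement's English description precedes it below -/
import Mathlib

section
/- Let l be an odd prime and let ρ, σ be units of Z/lZ of multiplicative orders α and β respectively. Then the least positive integer n such that either (ρⁿ = 1 and σⁿ = 1) or (ρⁿ = -1 and σⁿ = -1) is equal to i(α, β), where i(α, β) = lcm(α,β)/2 if α and β are both even with v₂(α) = v₂(β), and i(α, β) = lcm(α,β) otherwise. -/
/-- `i(x,y) = lcm(x,y)/2` if `x` and `y` are both even with equal 2-adic valuations,
and `lcm(x,y)` otherwise. -/
def iFun (x y : ℕ) : ℕ :=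
  if Even x ∧ Even y ∧ padicValNat 2 x = padicValNat 2 y then Nat.lcm x y / 2 else Nat.lcm x y

private lemma fact_le_of_dvd {a b : ℕ} (hb : b ≠ 0) (h : a ∣ b) :
    a.factorization 2 ≤ b.factorization 2 := by
  have ha : a ≠ 0 := fun h0 => hb (by simpa [h0] using h)
  exact (Nat.factorization_le_iff_dvd ha hb).2 h 2

private lemma key {a n : ℕ} (ha : a ≠ 0) (hn : n ≠ 0) (h1 : a ∣ 2 * n) (h2 : ¬ a ∣ n) :
    Even a ∧ a.factorization 2 = n.factorization 2 + 1 := by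
  have hfle : a.factorization ≤ (2 * n).factorization :=
    (Nat.factorization_le_iff_dvd ha (by positivity)).2 h1
  have hmul : (2 * n).factorization = (2 : ℕ).factorization + n.factorization :=
    Nat.factorization_mul two_ne_zero hn
  have h2fact : (2 : ℕ).factorization = Finsupp.single 2 1 := Nat.Prime.factorization Nat.prime_two
  have hodd : ∀ p, p ≠ 2 → a.factorization p ≤ n.factorization p := by
    intro p hp
    have := hfle p
    rw [hmul] at this
    simpa [h2fact, Finsupp.single_apply, hp, Ne.symm hp] using this
  have h2le : a.factorization 2 ≤ n.factorization 2 + 1 := by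
    have := hfle 2
    rw [hmul] at this
    simpa [h2fact, add_comm] using this
  have hne : ¬ a.factorization ≤ n.factorization :=
    fun h => h2 ((Nat.factorization_le_iff_dvd ha hn).1 h)
  have hlt : n.factorization 2 < a.factorization 2 := by
    by_contra hlt
    push_neg at hlt
    apply hne
    intro p
    by_cases hp : p = 2
    · subst hp; exact hlt
    · exact hodd p hp
  have heq : a.factorization 2 = n.factorization 2 + 1 := le_antisymm h2le hlt
  refine ⟨?_, heq⟩
  have : a.factorization 2 ≠ 0 := by omega
  exact (even_iff_two_dvd).2 (Nat.dvd_of_factorization_pos this)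

private lemma sq_unit {l : ℕ} [Fact l.Prime] (x : (ZMod l)ˣ) (h : x ^ 2 = 1) :
    x = 1 ∨ x = -1 := by
  have hv : ((x : ZMod l)) * (x : ZMod l) = 1 := by
    have := congrArg (Units.val) h
    push_cast at this
    rw [sq] at this
    exact_mod_cast this
  rcases mul_self_eq_one_iff.mp hv with h1 | h1
  · left; exact Units.ext (by simpa using h1)
  · right; exact Units.ext (by simpa using h1)

private lemma pow_eq_neg_one_iff' {l : ℕ} [Fact (2 < l)] [Fact l.Prime] (u : (ZMod l)ˣ) (n : ℕ) :
    u ^ n = -1 ↔ (orderOf u ∣ 2 * n ∧ ¬ orderOf u ∣ n) := by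
  have hneg : (-1 : (ZMod l)ˣ) ≠ 1 := by
    intro h
    exact ZMod.neg_one_ne_one (by simpa using congrArg Units.val h)
  constructor
  · intro h
    constructor
    · rw [orderOf_dvd_iff_pow_eq_one, mul_comm, pow_mul, h]
      simp
    · intro hd
      rw [orderOf_dvd_iff_pow_eq_one] at hd
      exact hneg (h ▸ hd)
  · rintro ⟨h1, h2⟩
    have hsq : (u ^ n) ^ 2 = 1 := by
      rw [← pow_mul, ← orderOf_dvd_iff_pow_eq_one, mul_comm]
      exact h1
    rcases sq_unit _ hsq with h | h
    · exact absurd (orderOf_dvd_iff_pow_eq_one.2 h) h2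
    · exact h

theorem stmt_9 (l : ℕ) (hl : l.Prime) (hlodd : Odd l)
    (ρ σ : (ZMod l)ˣ) (α β : ℕ) (hα : orderOf ρ = α) (hβ : orderOf σ = β) :
    IsLeast {n : ℕ | 0 < n ∧ ((ρ ^ n = 1 ∧ σ ^ n = 1) ∨ (ρ ^ n = -1 ∧ σ ^ n = -1))}
      (iFun α β) := by
  haveI : Fact l.Prime := ⟨hl⟩
  haveI : Fact (2 < l) := ⟨lt_of_le_of_ne hl.two_le (by
    rintro rfl
    exact (Nat.not_odd_iff_even.mpr (by decide)) hlodd)⟩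
  have hα0 : 0 < α := hα ▸ orderOf_pos ρ
  have hβ0 : 0 < β := hβ ▸ orderOf_pos σ
  set m := Nat.lcm α β with hm
  have hm0 : 0 < m := Nat.pos_of_ne_zero (Nat.lcm_ne_zero hα0.ne' hβ0.ne')
  have hmfact : m.factorization 2 = max (α.factorization 2) (β.factorization 2) := by
    rw [hm, Nat.factorization_lcm hα0.ne' hβ0.ne', Finsupp.sup_apply]
  by_cases hc : Even α ∧ Even β ∧ padicValNat 2 α = padicValNat 2 β
  · -- case: lcm / 2
    obtain ⟨heα, heβ, hval⟩ := hc
    have hvalf : α.factorization 2 = β.factorization 2 := by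
      rwa [Nat.factorization_def _ Nat.prime_two, Nat.factorization_def _ Nat.prime_two]
    have h2α : 2 ∣ α := even_iff_two_dvd.mp heα
    have h2m : 2 ∣ m := h2α.trans (Nat.dvd_lcm_left _ _)
    have hL0 : 0 < m / 2 := Nat.div_pos (Nat.le_of_dvd hm0 h2m) two_pos
    have hmL : 2 * (m / 2) = m := Nat.mul_div_cancel' h2m
    have hα2pos : 1 ≤ α.factorization 2 := by
      have h21 : (2:ℕ)^1 ∣ α := by simpa using h2α
      exact (Nat.Prime.pow_dvd_iff_le_factorization Nat.prime_two hα0.ne').mp h21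
    have hLfact : (m / 2).factorization 2 + 1 = m.factorization 2 := by
      conv_rhs => rw [← hmL]
      rw [Nat.factorization_mul two_ne_zero hL0.ne', Nat.Prime.factorization Nat.prime_two]
      simp [add_comm]
    have hmα : m.factorization 2 = α.factorization 2 := by
      rw [hmfact, hvalf]; simp
    have hnotdvd : ∀ a : ℕ, a.factorization 2 = α.factorization 2 → ¬ a ∣ m / 2 := by
      intro a haf hdvd
      have := fact_le_of_dvd hL0.ne' hdvd
      omega
    have hiFun : iFun α β = m / 2 := by
      rw [iFun, if_pos ⟨heα, heβ, hval⟩]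
    rw [hiFun]
    constructor
    · refine ⟨hL0, Or.inr ⟨?_, ?_⟩⟩
      · rw [pow_eq_neg_one_iff', hα, hmL]
        exact ⟨Nat.dvd_lcm_left _ _, hnotdvd α rfl⟩
      · rw [pow_eq_neg_one_iff', hβ, hmL]
        exact ⟨Nat.dvd_lcm_right _ _, hnotdvd β hvalf.symm⟩
    · rintro n ⟨hn0, h | h⟩
      · have h1 : α ∣ n := hα ▸ orderOf_dvd_iff_pow_eq_one.2 h.1
        have h2 : β ∣ n := hβ ▸ orderOf_dvd_iff_pow_eq_one.2 h.2
        have : m ∣ n := Nat.lcm_dvd h1 h2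
        calc m / 2 ≤ m := Nat.div_le_self _ _
          _ ≤ n := Nat.le_of_dvd hn0 this
      · have hρ' := (pow_eq_neg_one_iff' ρ n).mp h.1
        have hσ' := (pow_eq_neg_one_iff' σ n).mp h.2
        rw [hα] at hρ'
        rw [hβ] at hσ'
        have hmdvd : m ∣ 2 * n := Nat.lcm_dvd hρ'.1 hσ'.1
        have : m / 2 ∣ n := by
          rw [← hmL] at hmdvd
          exact (mul_dvd_mul_iff_left (two_ne_zero)).mp hmdvd
        exact Nat.le_of_dvd hn0 this
  · -- case: lcm
    have hiFun : iFun α β = m := by rw [iFun, if_neg hc]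
    rw [hiFun]
    constructor
    · refine ⟨hm0, Or.inl ⟨?_, ?_⟩⟩
      · rw [← orderOf_dvd_iff_pow_eq_one, hα]; exact Nat.dvd_lcm_left _ _
      · rw [← orderOf_dvd_iff_pow_eq_one, hβ]; exact Nat.dvd_lcm_right _ _
    · rintro n ⟨hn0, h | h⟩
      · have h1 : α ∣ n := hα ▸ orderOf_dvd_iff_pow_eq_one.2 h.1
        have h2 : β ∣ n := hβ ▸ orderOf_dvd_iff_pow_eq_one.2 h.2
        exact Nat.le_of_dvd hn0 (Nat.lcm_dvd h1 h2)
      · rw [pow_eq_neg_one_iff', hα] at h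
        have hσ' := (pow_eq_neg_one_iff' σ n).mp h.2
        rw [hβ] at hσ'
        obtain ⟨heα, hfα⟩ := key hα0.ne' hn0.ne' h.1.1 h.1.2
        obtain ⟨heβ, hfβ⟩ := key hβ0.ne' hn0.ne' hσ'.1 hσ'.2
        exfalso
        apply hc
        refine ⟨heα, heβ, ?_⟩
        rw [← Nat.factorization_def _ Nat.prime_two, ← Nat.factorization_def _ Nat.prime_two]
        omega
end

section
/- Let l be an odd prime, let ρ be a unit of Z/lZ of multiplicative order α, and let M be the 2×2 matrix over Z/lZ with rows (ρ, 1) and (0, ρ). Let v = (a, b) be a vector in (Z/lZ)² with b ≠ 0. Then the least positive integer n such that Mⁿ·v = v or Mⁿ·v = -v is h(α)·l. -/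
/-- `h(x) = x` if `x` is odd, `x/2` if `x` is even. -/
def hFun (x : ℕ) : ℕ := if Even x then x / 2 else x

private lemma stmt10_pow (l : ℕ) (ρ : (ZMod l)ˣ) (M : Matrix (Fin 2) (Fin 2) (ZMod l))
    (hM : M = !![(ρ : ZMod l), 1; 0, (ρ : ZMod l)]) : ∀ n : ℕ,
    M ^ n = !![(ρ:ZMod l) ^ n, (n : ZMod l) * (ρ:ZMod l) ^ n * ((ρ⁻¹ : (ZMod l)ˣ) : ZMod l);
               0, (ρ:ZMod l) ^ n] := by
  have hsr : ((ρ⁻¹ : (ZMod l)ˣ) : ZMod l) * (ρ : ZMod l) = 1 := by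
    exact_mod_cast ρ.inv_mul
  intro n
  induction n with
  | zero => simp [Matrix.one_fin_two]
  | succ n ih =>
    rw [pow_succ, ih, hM]
    ext i j
    fin_cases i <;> fin_cases j <;>
      simp [Matrix.mul_apply, Fin.sum_univ_two, pow_succ] <;>
      (first
        | ring1
        | linear_combination (-(1 + (n : ZMod l)) * (ρ:ZMod l) ^ n) * hsr)

private lemma stmt10_comp0 (l : ℕ) (ρ : (ZMod l)ˣ) (M : Matrix (Fin 2) (Fin 2) (ZMod l))
    (hM : M = !![(ρ : ZMod l), 1; 0, (ρ : ZMod l)]) (v : Fin 2 → ZMod l) (n : ℕ) :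
    (M ^ n).mulVec v 0 = (ρ:ZMod l) ^ n * v 0 +
      (n : ZMod l) * (ρ:ZMod l) ^ n * ((ρ⁻¹ : (ZMod l)ˣ) : ZMod l) * v 1 := by
  rw [stmt10_pow l ρ M hM n]
  simp [Matrix.mulVec, dotProduct, Fin.sum_univ_two]

private lemma stmt10_comp1 (l : ℕ) (ρ : (ZMod l)ˣ) (M : Matrix (Fin 2) (Fin 2) (ZMod l))
    (hM : M = !![(ρ : ZMod l), 1; 0, (ρ : ZMod l)]) (v : Fin 2 → ZMod l) (n : ℕ) :
    (M ^ n).mulVec v 1 = (ρ:ZMod l) ^ n * v 1 := by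
  rw [stmt10_pow l ρ M hM n]
  simp [Matrix.mulVec, dotProduct, Fin.sum_univ_two]

private lemma stmt10_form (l : ℕ) (ρ : (ZMod l)ˣ) (M : Matrix (Fin 2) (Fin 2) (ZMod l))
    (hM : M = !![(ρ : ZMod l), 1; 0, (ρ : ZMod l)]) (v : Fin 2 → ZMod l) (n : ℕ)
    (hn0 : (n : ZMod l) = 0) (ε : ZMod l) (hε : (ρ:ZMod l) ^ n = ε) :
    (M ^ n).mulVec v = ε • v := by
  funext i
  fin_cases i
  · show (M ^ n).mulVec v 0 = ε * v 0
    rw [stmt10_comp0 l ρ M hM v n, hn0, hε]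
    ring
  · show (M ^ n).mulVec v 1 = ε * v 1
    rw [stmt10_comp1 l ρ M hM v n, hε]

theorem stmt_10 (l : ℕ) (hl : l.Prime) (hlodd : Odd l)
    (ρ : (ZMod l)ˣ) (α : ℕ) (hα : orderOf ρ = α)
    (M : Matrix (Fin 2) (Fin 2) (ZMod l))
    (hM : M = !![(ρ : ZMod l), 1; 0, (ρ : ZMod l)])
    (v : Fin 2 → ZMod l) (hv : v 1 ≠ 0) :
    IsLeast {n : ℕ | 0 < n ∧ ((M ^ n).mulVec v = v ∨ (M ^ n).mulVec v = -v)}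
      (hFun α * l) := by
  haveI : Fact l.Prime := ⟨hl⟩
  have hsr : ((ρ⁻¹ : (ZMod l)ˣ) : ZMod l) * (ρ : ZMod l) = 1 := by
    exact_mod_cast ρ.inv_mul
  have hα0 : 0 < α := hα ▸ orderOf_pos ρ
  have hα2 : ∀ n : ℕ, α ∣ 2 * n ↔ hFun α ∣ n := by
    intro n
    unfold hFun
    split_ifs with he
    · obtain ⟨m, hm⟩ := he
      have hm2 : α = 2 * m := by omega
      have hd2 : α / 2 = m := by omega
      rw [hd2, hm2]
      exact ⟨fun h => (mul_dvd_mul_iff_left (two_ne_zero)).mp h,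
        fun h => mul_dvd_mul_left 2 h⟩
    · have hcop : Nat.Coprime α 2 :=
        Nat.coprime_two_right.mpr (Nat.not_even_iff_odd.mp he)
      exact ⟨fun h => hcop.dvd_of_dvd_mul_left h, fun h => h.mul_left 2⟩
  have hrn0 : ∀ n : ℕ, (ρ:ZMod l) ^ n ≠ 0 := by
    intro n
    exact_mod_cast (ρ ^ n).ne_zero
  have hsne : ((ρ⁻¹ : (ZMod l)ˣ) : ZMod l) ≠ 0 := fun h =>
    zero_ne_one (by rw [h, zero_mul] at hsr; exact hsr)
  -- key equivalence
  have key : ∀ n : ℕ, ((M ^ n).mulVec v = v ∨ (M ^ n).mulVec v = -v) ↔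
      (l ∣ n ∧ hFun α ∣ n) := by
    intro n
    have hstep : ∀ ε : ZMod l, (M ^ n).mulVec v 0 = ε * v 0 → (ρ:ZMod l) ^ n = ε →
        l ∣ n := by
      intro ε hε hrε
      rw [stmt10_comp0 l ρ M hM v n, hrε] at hε
      have hX : ((n : ZMod l) * ε * ((ρ⁻¹ : (ZMod l)ˣ) : ZMod l)) * v 1 = 0 := by
        linear_combination hε
      have hε0 : ε ≠ 0 := hrε ▸ hrn0 n
      have hn0 : (n : ZMod l) = 0 := by
        rcases mul_eq_zero.mp hX with h | h
        · rcases mul_eq_zero.mp h with h' | h'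
          · rcases mul_eq_zero.mp h' with h'' | h''
            · exact h''
            · exact absurd h'' hε0
          · exact absurd h' hsne
        · exact absurd h hv
      exact (ZMod.natCast_eq_zero_iff n l).mp hn0
    constructor
    · rintro (h | h)
      · have h1 : (ρ:ZMod l) ^ n * v 1 = v 1 := by
          rw [← stmt10_comp1 l ρ M hM v n]; exact congrFun h 1
        have hrn1 : (ρ:ZMod l) ^ n = 1 :=
          mul_right_cancel₀ hv (h1.trans (one_mul (v 1)).symm)
        have hldvd : l ∣ n := hstep 1 (by rw [one_mul]; exact congrFun h 0) hrn1
        have hun : ρ ^ n = 1 := Units.ext (by push_cast; exact hrn1)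
        have hαn : α ∣ n := hα ▸ orderOf_dvd_of_pow_eq_one hun
        exact ⟨hldvd, (hα2 n).mp (hαn.trans (dvd_mul_left n 2))⟩
      · have h1 : (ρ:ZMod l) ^ n * v 1 = -(v 1) := by
          rw [← stmt10_comp1 l ρ M hM v n]
          have hc := congrFun h 1
          rwa [Pi.neg_apply] at hc
        have hrn1 : (ρ:ZMod l) ^ n = -1 :=
          mul_right_cancel₀ hv (by rw [h1]; ring)
        have hldvd : l ∣ n := hstep (-1)
          (by rw [neg_one_mul, ← Pi.neg_apply v 0]; exact congrFun h 0) hrn1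
        have hun : ρ ^ (2 * n) = 1 := by
          refine Units.ext ?_
          push_cast
          rw [two_mul, pow_add, hrn1]
          ring
        exact ⟨hldvd, (hα2 n).mp (hα ▸ orderOf_dvd_of_pow_eq_one hun)⟩
    · rintro ⟨hln, hhn⟩
      have hn0 : (n : ZMod l) = 0 := (ZMod.natCast_eq_zero_iff n l).mpr hln
      have h2n : α ∣ 2 * n := (hα2 n).mpr hhn
      have hsq : ((ρ:ZMod l) ^ n) ^ 2 = 1 := by
        have hu : ρ ^ (2 * n) = 1 := by
          rw [← hα] at h2n; exact orderOf_dvd_iff_pow_eq_one.mp h2n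
        have hc := congrArg (Units.val) hu
        push_cast at hc
        rw [two_mul, pow_add] at hc
        rw [sq]; exact hc
      have hpm : (ρ:ZMod l) ^ n = 1 ∨ (ρ:ZMod l) ^ n = -1 := by
        have h' : ((ρ:ZMod l) ^ n - 1) * ((ρ:ZMod l) ^ n + 1) = 0 := by
          linear_combination hsq
        rcases mul_eq_zero.mp h' with h' | h'
        · exact Or.inl (by linear_combination h')
        · exact Or.inr (by linear_combination h')
      rcases hpm with hε | hε
      · exact Or.inl (by rw [stmt10_form l ρ M hM v n hn0 1 hε, one_smul])
      · refine Or.inr ?_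
        rw [stmt10_form l ρ M hM v n hn0 (-1) hε]
        exact neg_one_smul _ v
  -- the IsLeast statement
  have hcard : α ∣ l - 1 := by
    rw [← hα]
    have h1 := ZMod.card_units_eq_totient l
    have h2 := orderOf_dvd_card (G := (ZMod l)ˣ) (x := ρ)
    rwa [h1, Nat.totient_prime hl] at h2
  have hhα : hFun α ∣ α := by
    unfold hFun; split_ifs with he
    · exact Nat.div_dvd_of_dvd he.two_dvd
    · exact dvd_refl α
  have hhα0 : 0 < hFun α := by
    unfold hFun; split_ifs with he
    · obtain ⟨m, hm⟩ := he; omega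
    · exact hα0
  have hl1 : 0 < l - 1 := by have := hl.two_le; omega
  have hcop : Nat.Coprime (hFun α) l := by
    rw [Nat.coprime_comm, Nat.Prime.coprime_iff_not_dvd hl]
    intro hdvd
    have h1 : l ≤ hFun α := Nat.le_of_dvd hhα0 hdvd
    have h2 : hFun α ≤ l - 1 := Nat.le_of_dvd hl1 (hhα.trans hcard)
    omega
  constructor
  · exact ⟨Nat.mul_pos hhα0 hl.pos,
      (key _).mpr ⟨dvd_mul_left l (hFun α), dvd_mul_right (hFun α) l⟩⟩
  · rintro n ⟨hn0, hn⟩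
    rw [key] at hn
    exact Nat.le_of_dvd hn0 (Nat.Coprime.mul_dvd_of_dvd_of_dvd hcop hn.2 hn.1)
end

section
/- Let l be an odd prime and let ρ, σ be units of Z/lZ of multiplicative orders α and β respectively. Let D be the diagonal 2×2 matrix over Z/lZ with diagonal entries ρ and σ, and let H be the subgroup of GL₂(Z/lZ) generated by D and -I. Consider the action of H on the set S = {(a,b) ∈ (Z/lZ)² : a ≠ 0 and b ≠ 0}. Then every H-orbit in S has exactly 2·i(α,β) elements, and the number of H-orbits in S is (l-1)²/(2·i(α,β)). -/
/-- The orbit of a vector `v` under a subgroup `H` of `GL₂(Z/lZ)` acting by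
matrix-vector multiplication. -/
def glOrbit {l : ℕ} (H : Subgroup (GL (Fin 2) (ZMod l))) (v : Fin 2 → ZMod l) :
    Set (Fin 2 → ZMod l) :=
  {w | ∃ g ∈ H, (g : Matrix (Fin 2) (Fin 2) (ZMod l)).mulVec v = w}


lemma fact2 : (Nat.factorization 2) 2 = 1 := by
  simp [Nat.Prime.factorization Nat.prime_two]

lemma fact2' {p : ℕ} (hp : p ≠ 2) : (Nat.factorization 2) p = 0 := by
  simp [Nat.Prime.factorization Nat.prime_two, Finsupp.single_apply, hp.symm]

lemma nt_fact {a n : ℕ} (ha : 0 < a) (h1 : a ∣ 2*n) (h2 : ¬ a ∣ n) :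
    a.factorization 2 = n.factorization 2 + 1 ∧ Even a := by
  have hn : n ≠ 0 := by rintro rfl; exact h2 (dvd_zero a)
  have h2n : (2*n : ℕ) ≠ 0 := by positivity
  have hle : a.factorization ≤ (2*n).factorization :=
    (Nat.factorization_le_iff_dvd ha.ne' h2n).2 h1
  rw [Nat.factorization_mul (by norm_num) hn] at hle
  have hle2 : a.factorization 2 ≤ n.factorization 2 + 1 := by
    have := hle 2
    rw [Finsupp.add_apply, fact2] at this
    omega
  have hkey : ¬ a.factorization 2 ≤ n.factorization 2 := by
    intro hc
    apply h2
    rw [← Nat.factorization_le_iff_dvd ha.ne' hn]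
    intro p
    rcases eq_or_ne p 2 with rfl | hp
    · exact hc
    · have := hle p
      rwa [Finsupp.add_apply, fact2' hp, zero_add] at this
  refine ⟨by omega, ?_⟩
  have h1le : 1 ≤ a.factorization 2 := by omega
  rw [even_iff_two_dvd]
  calc (2:ℕ) = 2^1 := (pow_one 2).symm
  _ ∣ 2 ^ (a.factorization 2) := pow_dvd_pow 2 h1le
  _ ∣ a := Nat.ordProj_dvd a 2

lemma nt_exists {a b : ℕ} (ha : 0 < a) (hb : 0 < b) :
    (∃ n, (a ∣ 2*n ∧ ¬ a ∣ n) ∧ (b ∣ 2*n ∧ ¬ b ∣ n)) ↔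
      (Even a ∧ Even b ∧ a.factorization 2 = b.factorization 2) := by
  constructor
  · rintro ⟨n, ⟨ha1, ha2⟩, hb1, hb2⟩
    obtain ⟨hea, hea'⟩ := nt_fact ha ha1 ha2
    obtain ⟨heb, heb'⟩ := nt_fact hb hb1 hb2
    exact ⟨hea', heb', by omega⟩
  · rintro ⟨hea, heb, hfab⟩
    have hL : 0 < Nat.lcm a b := Nat.lcm_pos ha hb
    have h2L : 2 ∣ Nat.lcm a b := dvd_trans hea.two_dvd (Nat.dvd_lcm_left a b)
    refine ⟨Nat.lcm a b / 2, ?_⟩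
    have h2n : 2 * (Nat.lcm a b / 2) = Nat.lcm a b := Nat.mul_div_cancel' h2L
    have hfl : (Nat.lcm a b).factorization 2 = a.factorization 2 := by
      rw [Nat.factorization_lcm ha.ne' hb.ne']
      simp [hfab]
    have hn0 : Nat.lcm a b / 2 ≠ 0 := by
      intro h; rw [h, mul_zero] at h2n; omega
    have hfn : (Nat.lcm a b).factorization 2 = (Nat.lcm a b / 2).factorization 2 + 1 := by
      conv_lhs => rw [← h2n]
      rw [Nat.factorization_mul (by norm_num) hn0, Finsupp.add_apply, fact2]
      omega
    have key : ∀ c : ℕ, 0 < c → c.factorization 2 = a.factorization 2 → ¬ c ∣ Nat.lcm a b / 2 := by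
      intro c hc hfc hdvd
      have := (Nat.factorization_le_iff_dvd hc.ne' hn0).2 hdvd 2
      omega
    rw [h2n]
    exact ⟨⟨Nat.dvd_lcm_left a b, key a ha rfl⟩, Nat.dvd_lcm_right a b, key b hb (by omega)⟩

open Subgroup

lemma cl_mem (G : Type*) [CommGroup G] (g z : G) (hz : z ∈ Subgroup.zpowers g) :
    Subgroup.closure {g, z} = Subgroup.zpowers g := by
  apply le_antisymm
  · rw [Subgroup.closure_le]
    rintro x (rfl | rfl)
    · exact Subgroup.mem_zpowers x
    · exact hz
  · rw [Subgroup.zpowers_le]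
    exact Subgroup.subset_closure (Set.mem_insert g {z})

lemma cl_notMem {G : Type*} [CommGroup G] [Finite G] {g z : G}
    (hz : z ∉ Subgroup.zpowers g) (hz2 : z * z = 1) :
    Nat.card (Subgroup.closure {g, z}) = 2 * orderOf g := by
  have hzinv : z⁻¹ = z := inv_eq_of_mul_eq_one_right hz2
  set A : Set G := (Subgroup.zpowers g : Set G) with hA
  set W : Subgroup G :=
    { carrier := A ∪ (fun x => z * x) '' A
      one_mem' := Or.inl (one_mem _)
      mul_mem' := by
        rintro x y (hx | ⟨a, ha, rfl⟩) (hy | ⟨b, hb, rfl⟩)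
        · exact Or.inl (mul_mem hx hy)
        · exact Or.inr ⟨x * b, mul_mem hx hb, by rw [mul_left_comm]⟩
        · exact Or.inr ⟨a * y, mul_mem ha hy, by rw [mul_assoc]⟩
        · refine Or.inl ?_
          have h : z * a * (z * b) = a * b := by
            rw [mul_mul_mul_comm, hz2, one_mul]
          rw [h]; exact mul_mem ha hb
      inv_mem' := by
        rintro x (hx | ⟨a, ha, rfl⟩)
        · exact Or.inl (inv_mem hx)
        · exact Or.inr ⟨a⁻¹, inv_mem ha, by simp [mul_inv, hzinv, mul_comm]⟩ } with hW
  have hKW : Subgroup.closure {g, z} = W := by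
    apply le_antisymm
    · rw [Subgroup.closure_le]
      rintro x (rfl | rfl)
      · exact Or.inl (Subgroup.mem_zpowers x)
      · exact Or.inr ⟨1, one_mem _, mul_one x⟩
    · intro x hx
      rcases hx with hx | ⟨a, ha, rfl⟩
      · exact Subgroup.zpowers_le.2 (Subgroup.subset_closure (Set.mem_insert g {z})) hx
      · exact mul_mem (Subgroup.subset_closure (Set.mem_insert_of_mem g rfl))
          (Subgroup.zpowers_le.2 (Subgroup.subset_closure (Set.mem_insert g {z})) ha)
  have hdisj : Disjoint A ((fun x => z * x) '' A) := by
    rw [Set.disjoint_left]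
    rintro x hx ⟨a, ha, hxa⟩
    apply hz
    have h : z = x * a⁻¹ := by rw [← hxa, mul_assoc, mul_inv_cancel, mul_one]
    rw [h]
    exact mul_mem hx (inv_mem ha)
  have hcardW : Nat.card W = (A ∪ (fun x => z * x) '' A).ncard := by
    rw [← Nat.card_coe_set_eq]
    rfl
  rw [hKW, hcardW, Set.ncard_union_eq hdisj (Set.toFinite _) (Set.toFinite _),
    Set.ncard_image_of_injective _ (mul_right_injective z)]
  have hAcard : A.ncard = orderOf g := by
    rw [← Nat.card_coe_set_eq]
    exact Nat.card_zpowers g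
  rw [hAcard, two_mul]
open Subgroup

lemma unit_pow_eq_neg_one_iff {l : ℕ} [Fact l.Prime] [Fact (2 < l)] (u : (ZMod l)ˣ) (n : ℕ) :
    u ^ n = -1 ↔ (orderOf u ∣ 2 * n ∧ ¬ orderOf u ∣ n) := by
  rw [← orderOf_units (y := u)]
  rw [Units.ext_iff]
  push_cast
  rw [orderOf_dvd_iff_pow_eq_one, orderOf_dvd_iff_pow_eq_one]
  constructor
  · intro h
    refine ⟨?_, ?_⟩
    · rw [two_mul, pow_add, h]
      simp
    · rw [h]
      exact ZMod.neg_one_ne_one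
  · rintro ⟨h1, h2⟩
    rw [two_mul, pow_add] at h1
    rcases mul_self_eq_one_iff.1 h1 with h | h
    · exact absurd h h2
    · exact h

lemma cardK {l : ℕ} [Fact l.Prime] [Fact (2 < l)] (ρ σ : (ZMod l)ˣ) :
    Nat.card (Subgroup.closure ({(ρ, σ), (-1, -1)} : Set ((ZMod l)ˣ × (ZMod l)ˣ))) =
      2 * iFun (orderOf ρ) (orderOf σ) := by
  haveI : NeZero l := ⟨(Fact.out : l.Prime).pos.ne'⟩
  set α := orderOf ρ
  set β := orderOf σ
  have hα : 0 < α := orderOf_pos ρ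
  have hβ : 0 < β := orderOf_pos σ
  have horder : orderOf ((ρ, σ) : (ZMod l)ˣ × (ZMod l)ˣ) = Nat.lcm α β := Prod.orderOf _
  have hpow : ∀ n : ℕ, ((ρ, σ) : (ZMod l)ˣ × (ZMod l)ˣ) ^ n = (-1, -1) ↔
      ((α ∣ 2*n ∧ ¬ α ∣ n) ∧ (β ∣ 2*n ∧ ¬ β ∣ n)) := by
    intro n
    rw [Prod.pow_mk, Prod.ext_iff]
    exact and_congr (unit_pow_eq_neg_one_iff ρ n) (unit_pow_eq_neg_one_iff σ n)
  have hmem : ((-1, -1) : (ZMod l)ˣ × (ZMod l)ˣ) ∈ Subgroup.zpowers (ρ, σ) ↔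
      (Even α ∧ Even β ∧ padicValNat 2 α = padicValNat 2 β) := by
    rw [← (isOfFinOrder_of_finite ((ρ, σ) : (ZMod l)ˣ × (ZMod l)ˣ)).mem_powers_iff_mem_zpowers,
      Submonoid.mem_powers_iff]
    rw [← Nat.factorization_def α Nat.prime_two, ← Nat.factorization_def β Nat.prime_two,
      ← nt_exists hα hβ]
    exact exists_congr hpow
  have hlcm2 : Even α → 2 ∣ Nat.lcm α β := fun h => h.two_dvd.trans (Nat.dvd_lcm_left α β)
  by_cases hc : Even α ∧ Even β ∧ padicValNat 2 α = padicValNat 2 β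
  · rw [iFun, if_pos hc]
    rw [cl_mem _ _ _ (hmem.2 hc), Nat.card_zpowers, horder,
      Nat.mul_div_cancel' (hlcm2 hc.1)]
  · rw [iFun, if_neg hc]
    rw [cl_notMem (fun h => hc (hmem.1 h)) (by simp [Prod.ext_iff]), horder]

open Subgroup Matrix

def diagHom (l : ℕ) : ((ZMod l)ˣ × (ZMod l)ˣ) →* GL (Fin 2) (ZMod l) where
  toFun p := ⟨Matrix.diagonal ![(p.1 : ZMod l), (p.2 : ZMod l)],
    Matrix.diagonal ![((p.1⁻¹ : (ZMod l)ˣ) : ZMod l), ((p.2⁻¹ : (ZMod l)ˣ) : ZMod l)],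
    by
      rw [Matrix.diagonal_mul_diagonal, ← Pi.mul_def]
      have h : (![(p.1 : ZMod l), (p.2 : ZMod l)] *
          ![((p.1⁻¹ : (ZMod l)ˣ) : ZMod l), ((p.2⁻¹ : (ZMod l)ˣ) : ZMod l)]) = 1 := by
        funext i; fin_cases i <;> simp
      rw [h]; exact Matrix.diagonal_one,
    by
      rw [Matrix.diagonal_mul_diagonal, ← Pi.mul_def]
      have h : (![((p.1⁻¹ : (ZMod l)ˣ) : ZMod l), ((p.2⁻¹ : (ZMod l)ˣ) : ZMod l)] *
          ![(p.1 : ZMod l), (p.2 : ZMod l)]) = 1 := by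
        funext i; fin_cases i <;> simp
      rw [h]; exact Matrix.diagonal_one⟩
  map_one' := by
    ext : 1
    show Matrix.diagonal _ = _
    have h : (![(((1 : (ZMod l)ˣ × (ZMod l)ˣ).1 : (ZMod l)ˣ) : ZMod l),
        (((1 : (ZMod l)ˣ × (ZMod l)ˣ).2 : (ZMod l)ˣ) : ZMod l)]) = 1 := by
      funext i; fin_cases i <;> simp
    rw [h]; exact Matrix.diagonal_one
  map_mul' p q := by
    ext : 1
    show Matrix.diagonal _ = _
    have h : (![(((p * q).1 : (ZMod l)ˣ) : ZMod l), (((p * q).2 : (ZMod l)ˣ) : ZMod l)]) =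
        ![(p.1 : ZMod l), (p.2 : ZMod l)] * ![(q.1 : ZMod l), (q.2 : ZMod l)] := by
      funext i; fin_cases i <;> simp
    rw [h, Pi.mul_def, ← Matrix.diagonal_mul_diagonal]
    rfl

lemma diagHom_apply {l : ℕ} (p : (ZMod l)ˣ × (ZMod l)ˣ) :
    (diagHom l p : Matrix (Fin 2) (Fin 2) (ZMod l)) =
      Matrix.diagonal ![(p.1 : ZMod l), (p.2 : ZMod l)] := rfl

lemma diagHom_injective (l : ℕ) : Function.Injective (diagHom l) := by
  intro p q h
  have h' : (diagHom l p : Matrix (Fin 2) (Fin 2) (ZMod l)) = diagHom l q :=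
    congrArg Units.val h
  simp only [diagHom_apply] at h'
  have h0 := congrFun (congrFun h' 0) 0
  have h1 := congrFun (congrFun h' 1) 1
  simp [Matrix.diagonal] at h0 h1
  exact Prod.ext (Units.ext h0) (Units.ext h1)

lemma diagHom_neg_one {l : ℕ} : diagHom l (-1, -1) = -1 := by
  ext : 1
  show Matrix.diagonal _ = _
  have h : (![(((-1 : (ZMod l)ˣ)) : ZMod l), ((-1 : (ZMod l)ˣ) : ZMod l)]) =
      -(1 : Fin 2 → ZMod l) := by
    funext i; fin_cases i <;> simp
  rw [h]
  have h2 : ((↑(-1 : GL (Fin 2) (ZMod l))) : Matrix (Fin 2) (Fin 2) (ZMod l)) =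
      -(1 : Matrix (Fin 2) (Fin 2) (ZMod l)) := by simp
  rw [h2, ← Matrix.diagonal_one, Matrix.diagonal_neg]; rfl

def fv {l : ℕ} (p : (ZMod l)ˣ × (ZMod l)ˣ) : Fin 2 → ZMod l := ![(p.1 : ZMod l), (p.2 : ZMod l)]

lemma fv_injective {l : ℕ} : Function.Injective (fv (l := l)) := by
  intro p q h
  have h0 := congrFun h 0
  have h1 := congrFun h 1
  simp [fv] at h0 h1
  exact Prod.ext (Units.ext h0) (Units.ext h1)


lemma diag_mulVec {l : ℕ} (k u : (ZMod l)ˣ × (ZMod l)ˣ) :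
    (diagHom l k : Matrix (Fin 2) (Fin 2) (ZMod l)).mulVec (fv u) = fv (k * u) := by
  funext i
  fin_cases i <;> simp [diagHom_apply, fv, Matrix.mulVec_diagonal]

lemma orbit_eq {l : ℕ} (K : Subgroup ((ZMod l)ˣ × (ZMod l)ˣ)) (u : (ZMod l)ˣ × (ZMod l)ˣ) :
    glOrbit (K.map (diagHom l)) (fv u) = fv '' ((fun k => k * u) '' (K : Set _)) := by
  ext w
  constructor
  · rintro ⟨g, hg, rfl⟩
    obtain ⟨k, hk, rfl⟩ := Subgroup.mem_map.1 hg
    exact ⟨k * u, ⟨k, hk, rfl⟩, (diag_mulVec k u).symm⟩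
  · rintro ⟨x, ⟨k, hk, rfl⟩, rfl⟩
    exact ⟨diagHom l k, Subgroup.mem_map.2 ⟨k, hk, rfl⟩, diag_mulVec k u⟩

theorem stmt_11 (l : ℕ) (hl : l.Prime) (hlodd : Odd l)
    (ρ σ : (ZMod l)ˣ) (α β : ℕ) (hα : orderOf ρ = α) (hβ : orderOf σ = β)
    (D : GL (Fin 2) (ZMod l))
    (hD : (D : Matrix (Fin 2) (Fin 2) (ZMod l)) =
      Matrix.diagonal ![(ρ : ZMod l), (σ : ZMod l)])
    (H : Subgroup (GL (Fin 2) (ZMod l))) (hH : H = Subgroup.closure {D, -1})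
    (S : Set (Fin 2 → ZMod l)) (hS : S = {v | v 0 ≠ 0 ∧ v 1 ≠ 0}) :
    (∀ v ∈ S, Nat.card (glOrbit H v) = 2 * iFun α β) ∧
    Nat.card {O : Set (Fin 2 → ZMod l) | ∃ v ∈ S, O = glOrbit H v} =
      (l - 1) ^ 2 / (2 * iFun α β) := by
  haveI : Fact l.Prime := ⟨hl⟩
  have hl2 : 2 < l := by
    have hne : l ≠ 2 := fun h => by simp [h, Nat.odd_iff] at hlodd
    exact lt_of_le_of_ne hl.two_le (Ne.symm hne)
  haveI : Fact (2 < l) := ⟨hl2⟩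
  haveI : NeZero l := ⟨hl.pos.ne'⟩
  subst hα hβ hS
  set G := (ZMod l)ˣ × (ZMod l)ˣ
  set K : Subgroup G := Subgroup.closure {((ρ, σ) : G), (-1, -1)} with hK
  have hDval : diagHom l (ρ, σ) = D := Units.ext (by rw [diagHom_apply, hD])
  have hφK : H = K.map (diagHom l) := by
    rw [hH, hK, MonoidHom.map_closure, Set.image_insert_eq, Set.image_singleton,
      diagHom_neg_one, hDval]
  have cardK' : Nat.card K = 2 * iFun (orderOf ρ) (orderOf σ) := cardK ρ σ
  -- the map from S-elements to units
  have hfvS : ∀ (v : Fin 2 → ZMod l) (h0 : v 0 ≠ 0) (h1 : v 1 ≠ 0),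
      fv ((Units.mk0 (v 0) h0, Units.mk0 (v 1) h1) : G) = v := by
    intro v h0 h1
    funext i
    fin_cases i <;> simp [fv]
  have horbcard : ∀ u : G, Nat.card (glOrbit H (fv u)) = 2 * iFun (orderOf ρ) (orderOf σ) := by
    intro u
    rw [hφK, orbit_eq, Nat.card_coe_set_eq,
      Set.ncard_image_of_injective _ fv_injective,
      Set.ncard_image_of_injective _ (mul_left_injective u),
      ← Nat.card_coe_set_eq]
    exact cardK'
  constructor
  · rintro v ⟨h0, h1⟩
    rw [← hfvS v h0 h1]
    exact horbcard _
  · -- coset equality helper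
    have coset_eq : ∀ a b : G, a⁻¹ * b ∈ K →
        (fun k => k * a) '' (K : Set G) = (fun k => k * b) '' (K : Set G) := by
      intro a b hab
      ext x
      constructor
      · rintro ⟨k, hk, rfl⟩
        refine ⟨k * (b⁻¹ * a), mul_mem hk ?_, ?_⟩
        · have : (a⁻¹ * b)⁻¹ ∈ K := inv_mem hab
          rwa [mul_inv, inv_inv, mul_comm] at this
        · show k * (b⁻¹ * a) * b = k * a
          rw [mul_assoc, mul_comm b⁻¹ a, mul_assoc, inv_mul_cancel, mul_one]
      · rintro ⟨k, hk, rfl⟩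
        refine ⟨k * (a⁻¹ * b), mul_mem hk hab, ?_⟩
        show k * (a⁻¹ * b) * a = k * b
        rw [mul_assoc, mul_comm a⁻¹ b, mul_assoc, inv_mul_cancel, mul_one]
    have wd : ∀ a b : G, a⁻¹ * b ∈ K → glOrbit H (fv a) = glOrbit H (fv b) := by
      intro a b hab
      rw [hφK, orbit_eq, orbit_eq, coset_eq a b hab]
    set F : G ⧸ K → Set (Fin 2 → ZMod l) :=
      Quotient.lift (fun u => glOrbit H (fv u))
        (fun a b h => wd a b (QuotientGroup.leftRel_apply.mp h)) with hF
    have Finj : Function.Injective F := by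
      intro q1 q2
      refine Quotient.inductionOn₂ q1 q2 ?_
      intro a b h
      have h' : glOrbit H (fv a) = glOrbit H (fv b) := h
      rw [hφK, orbit_eq, orbit_eq] at h'
      have h'' : (fun k => k * a) '' (K : Set G) = (fun k => k * b) '' (K : Set G) :=
        Set.image_injective.mpr fv_injective h'
      have hb : b ∈ (fun k => k * a) '' (K : Set G) := by
        rw [h'']; exact ⟨1, one_mem K, one_mul b⟩
      obtain ⟨k, hk, hkb⟩ := hb
      have : a⁻¹ * b ∈ K := by
        rw [← hkb]
        show a⁻¹ * (k * a) ∈ K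
        rwa [mul_comm k a, ← mul_assoc, inv_mul_cancel, one_mul]
      exact Quotient.sound (QuotientGroup.leftRel_apply.mpr this)
    have hrange : {O : Set (Fin 2 → ZMod l) | ∃ v ∈ {v : Fin 2 → ZMod l | v 0 ≠ 0 ∧ v 1 ≠ 0},
        O = glOrbit H v} = Set.range F := by
      ext O
      simp only [Set.mem_setOf_eq, Set.mem_range]
      constructor
      · rintro ⟨v, ⟨h0, h1⟩, rfl⟩
        exact ⟨QuotientGroup.mk ((Units.mk0 (v 0) h0, Units.mk0 (v 1) h1) : G),
          by rw [show F _ = glOrbit H (fv _) from rfl, hfvS v h0 h1]⟩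
      · rintro ⟨q, rfl⟩
        obtain ⟨u, rfl⟩ := Quotient.exists_rep q
        exact ⟨fv u, ⟨Units.ne_zero u.1, Units.ne_zero u.2⟩, rfl⟩
    have hcardrange : Nat.card (Set.range F) = Nat.card (G ⧸ K) :=
      (Nat.card_congr (Equiv.ofInjective F Finj)).symm
    rw [hrange, hcardrange]
    have htot : Nat.card G = Nat.card (G ⧸ K) * Nat.card K :=
      Subgroup.card_eq_card_quotient_mul_card_subgroup K
    have hG : Nat.card G = (l - 1) ^ 2 := by
      rw [Nat.card_prod, Nat.card_eq_fintype_card, ZMod.card_units l, sq]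
    have hKpos : 0 < Nat.card K := Nat.card_pos
    rw [cardK'] at htot hKpos
    rw [hG] at htot
    exact (Nat.div_eq_of_eq_mul_left hKpos (by rw [htot, mul_comm])).symm
end

section
/- Let l be an odd prime, let ρ be a unit of Z/lZ of multiplicative order α, and let M be the 2×2 matrix over Z/lZ with rows (ρ, 1) and (0, ρ). Let H be the subgroup of GL₂(Z/lZ) generated by M and -I, acting on the set T = {(a,b) ∈ (Z/lZ)² : b ≠ 0}. Then every H-orbit in T has exactly 2·h(α)·l elements, and the number of H-orbits in T is (l-1)/(2·h(α)). -/
/-!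
Since `α ∣ l - 1` is prime to `l`, the Chinese remainder theorem lets the powers
`M ^ k = !![ρ ^ k, k ρ ^ k / ρ; 0, ρ ^ k]` realise any diagonal entry `ρ ^ m` together with any
upper-right coefficient. Hence the orbit of `v` with `v 1 ≠ 0` is the set of all `w` with
`w 1 ∈ C · v 1`, where `C = ⟨ρ, -1⟩ ≤ (ZMod l)ˣ`: it has `|C| · l` elements, and the orbits
correspond to the cosets of `C`. As `(ZMod l)ˣ` is cyclic, `|C| = lcm α 2 = 2 h(α)`.
-/

open Matrix

theorem two_mul_hFun (n : ℕ) : 2 * hFun n = Nat.lcm n 2 := by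
  unfold hFun
  split_ifs with h
  · rw [Nat.mul_div_cancel' h.two_dvd, Nat.lcm_eq_left_iff_dvd.mpr h.two_dvd]
  · rw [(Nat.coprime_two_right.mpr (Nat.not_even_iff_odd.mp h)).lcm_eq_mul, mul_comm]

theorem IsCyclic.card_closure_pair {G : Type*} [CommGroup G] [IsCyclic G] (x y : G) :
    Nat.card (Subgroup.closure {x, y}) = Nat.lcm (orderOf x) (orderOf y) := by
  set C := Subgroup.closure ({x, y} : Set G)
  have hx : x ∈ C := Subgroup.subset_closure (by simp)
  have hy : y ∈ C := Subgroup.subset_closure (by simp)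
  rw [← IsCyclic.exponent_eq_card]
  apply Nat.dvd_antisymm
  · have hC : C ≤ (powMonoidHom (Nat.lcm (orderOf x) (orderOf y))).ker := by
      rw [Subgroup.closure_le]
      rintro z (rfl | rfl | _)
      · exact orderOf_dvd_iff_pow_eq_one.mp (Nat.dvd_lcm_left _ _)
      · exact orderOf_dvd_iff_pow_eq_one.mp (Nat.dvd_lcm_right _ _)
    exact Monoid.exponent_dvd_of_forall_pow_eq_one fun g => Subtype.ext (hC g.2)
  · refine Nat.lcm_dvd ?_ ?_
    · simpa using Monoid.order_dvd_exponent (⟨x, hx⟩ : C)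
    · simpa using Monoid.order_dvd_exponent (⟨y, hy⟩ : C)

theorem ZMod.exists_pow_eq_and_natCast_eq {p : ℕ} [Fact p.Prime] (u : (ZMod p)ˣ) (m : ℕ)
    (d : ZMod p) : ∃ k : ℕ, u ^ k = u ^ m ∧ (k : ZMod p) = d := by
  have hcop : (orderOf u).Coprime p :=
    Nat.Coprime.coprime_dvd_left (ZMod.orderOf_units_dvd_card_sub_one u)
      ((Nat.coprime_self_sub_left (Fact.out : p.Prime).one_le).mpr (Nat.coprime_one_left p))
  obtain ⟨k, hkm, hkd⟩ := Nat.chineseRemainder hcop m d.val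
  refine ⟨k, pow_eq_pow_iff_modEq.mpr hkm, ?_⟩
  rw [(ZMod.natCast_eq_natCast_iff _ _ _).mpr hkd, ZMod.natCast_zmod_val]

theorem Matrix.jordanBlock_two_pow {K : Type*} [Field K] {r : K} (hr : r ≠ 0) (k : ℕ) :
    !![r, 1; 0, r] ^ k = !![r ^ k, k * r ^ k / r; 0, r ^ k] := by
  induction k with
  | zero => simp [one_fin_two]
  | succ n ih =>
    rw [pow_succ, ih]
    ext i j
    fin_cases i <;> fin_cases j
    all_goals simp [pow_succ]
    field_simp
    ring

theorem exists_pow_of_mem_closure_pair_neg_one {G : Type*} [CommGroup G] [HasDistribNeg G]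
    [Finite G] {u c : G} (hc : c ∈ Subgroup.closure {u, -1}) :
    ∃ k : ℕ, c = u ^ k ∨ c = -u ^ k := by
  obtain ⟨m, n, rfl⟩ := Subgroup.mem_closure_pair.mp hc
  obtain ⟨k, hk : u ^ k = u ^ m⟩ : u ^ m ∈ Submonoid.powers u :=
    mem_powers_iff_mem_zpowers.mpr (zpow_mem (Subgroup.mem_zpowers u) m)
  refine ⟨k, ?_⟩
  rcases Int.even_or_odd n with hn | hn
  · left; rw [hn.neg_one_zpow, mul_one, ← hk]
  · right; rw [hn.neg_one_zpow, mul_neg_one, ← hk]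

theorem exists_mem_closure_pair_mulVec_apply_one {K : Type*} [CommRing K] {M : GL (Fin 2) K}
    {ρ : Kˣ}
    (hM₁₀ : (M : Matrix (Fin 2) (Fin 2) K) 1 0 = 0) (hM₁₁ : (M : Matrix (Fin 2) (Fin 2) K) 1 1 = ρ)
    {g : GL (Fin 2) K} (hg : g ∈ Subgroup.closure {M, -1}) :
    ∃ c ∈ Subgroup.closure {ρ, -1}, ∀ v : Fin 2 → K,
      ((g : Matrix (Fin 2) (Fin 2) K) *ᵥ v) 1 = c * v 1 := by
  induction hg using Subgroup.closure_induction with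
  | mem g hg =>
    rcases hg with rfl | rfl
    · exact ⟨ρ, Subgroup.subset_closure (by simp),
        fun v => by simp [mulVec_fin_two, hM₁₀, hM₁₁]⟩
    · exact ⟨-1, Subgroup.subset_closure (by simp), fun v => by simp⟩
  | one => exact ⟨1, one_mem _, fun v => by simp⟩
  | mul g h _ _ ihg ihh =>
    obtain ⟨c, hc, hgv⟩ := ihg
    obtain ⟨d, hd, hhv⟩ := ihh
    refine ⟨c * d, mul_mem hc hd, fun v => ?_⟩
    rw [Units.val_mul, ← mulVec_mulVec, hgv, hhv, Units.val_mul, mul_assoc]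
  | inv g _ ih =>
    obtain ⟨c, hc, hgv⟩ := ih
    refine ⟨c⁻¹, inv_mem hc, fun v => ?_⟩
    have hv := hgv ((↑g⁻¹ : Matrix (Fin 2) (Fin 2) K) *ᵥ v)
    rw [mulVec_mulVec, ← Units.val_mul, mul_inv_cancel, Units.val_one, one_mulVec] at hv
    rw [hv, ← mul_assoc, ← Units.val_mul, inv_mul_cancel, Units.val_one, one_mul]

def cosetFiber {K : Type*} [Field K] (C : Subgroup Kˣ) (a : K) : Set (Fin 2 → K) :=
  {w | ∃ c ∈ C, w 1 = c * a}

section Field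

variable {K : Type*} [Field K] (C : Subgroup Kˣ)

theorem card_cosetFiber {a : K} (ha : a ≠ 0) :
    Nat.card (cosetFiber C a) = Nat.card C * Nat.card K := by
  have hrange : cosetFiber C a = Set.range fun x : C × K => ![x.2, ((x.1 : Kˣ) : K) * a] := by
    ext w
    constructor
    · rintro ⟨c, hc, hw⟩
      exact ⟨(⟨c, hc⟩, w 0), by ext i; fin_cases i <;> simp [hw]⟩
    · rintro ⟨⟨c, x⟩, rfl⟩
      exact ⟨c, c.2, by simp⟩
  have hinj : Function.Injective fun x : C × K => ![x.2, ((x.1 : Kˣ) : K) * a] := by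
    rintro ⟨c, x⟩ ⟨d, y⟩ h
    have h0 : x = y := by simpa using congrFun h 0
    have h1 : ((c : Kˣ) : K) = (d : Kˣ) := by simpa [ha] using congrFun h 1
    rw [h0, Subtype.ext (Units.ext h1)]
  rw [hrange, Nat.card_range_of_injective hinj, Nat.card_prod]

theorem cosetFiber_eq_iff (a b : Kˣ) : cosetFiber C a = cosetFiber C b ↔ a⁻¹ * b ∈ C := by
  constructor
  · intro h
    obtain ⟨c, hc, hb⟩ : ![0, (b : K)] ∈ cosetFiber C a := h ▸ ⟨1, one_mem C, by simp⟩
    have : b = c * a := Units.ext (by simpa using hb)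
    rwa [this, mul_comm c, inv_mul_cancel_left]
  · intro h
    have key : ∀ a b : Kˣ, a⁻¹ * b ∈ C → cosetFiber C b ⊆ cosetFiber C a := by
      rintro a b hab w ⟨c, hc, hw⟩
      exact ⟨c * (a⁻¹ * b), mul_mem hc hab, by simp [hw, mul_assoc, mul_left_comm]⟩
    exact (key a b h).antisymm' (key b a (by simpa using inv_mem h))

theorem card_setOf_cosetFiber :
    Nat.card {O : Set (Fin 2 → K) | ∃ v : Fin 2 → K, v 1 ≠ 0 ∧ O = cosetFiber C (v 1)} =
      C.index := by
  have hrange : {O : Set (Fin 2 → K) | ∃ v : Fin 2 → K, v 1 ≠ 0 ∧ O = cosetFiber C (v 1)} =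
      Set.range fun u : Kˣ => cosetFiber C u := by
    ext O
    constructor
    · rintro ⟨v, hv, rfl⟩
      exact ⟨Units.mk0 _ hv, rfl⟩
    · rintro ⟨u, rfl⟩
      exact ⟨![0, u], by simp, by simp⟩
  rw [hrange, Subgroup.index, ← Nat.card_congr (Setoid.quotientKerEquivRange _)]
  exact Nat.card_congr (Quotient.congrRight fun a b => (cosetFiber_eq_iff C a b).trans
    QuotientGroup.leftRel_apply.symm)

end Field

section ZMod

variable {p : ℕ} [Fact p.Prime] {ρ : (ZMod p)ˣ} {M : GL (Fin 2) (ZMod p)}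
  (hM : (M : Matrix (Fin 2) (Fin 2) (ZMod p)) = !![(ρ : ZMod p), 1; 0, (ρ : ZMod p)])
include hM

theorem exists_pow_mulVec_eq {v w : Fin 2 → ZMod p} (hv : v 1 ≠ 0) {m : ℕ}
    (hw : w 1 = ↑(ρ ^ m) * v 1) :
    ∃ k : ℕ, ((M ^ k : GL (Fin 2) (ZMod p)) : Matrix (Fin 2) (Fin 2) (ZMod p)) *ᵥ v = w := by
  have hr : (ρ : ZMod p) ≠ 0 := ρ.ne_zero
  obtain ⟨k, hkm, hkd⟩ := ZMod.exists_pow_eq_and_natCast_eq ρ m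
    ((w 0 - ρ ^ m * v 0) * ρ / (ρ ^ m * v 1))
  have hrk : (ρ : ZMod p) ^ k = ρ ^ m := by simpa using congrArg Units.val hkm
  refine ⟨k, ?_⟩
  rw [Units.val_pow_eq_pow_val, hM, jordanBlock_two_pow hr, hrk, hkd, mulVec_fin_two]
  ext i
  fin_cases i
  · simp
    field_simp
    ring
  · simp [hw]

theorem glOrbit_closure_pair_eq {v : Fin 2 → ZMod p} (hv : v 1 ≠ 0) :
    glOrbit (Subgroup.closure {M, -1}) v = cosetFiber (Subgroup.closure {ρ, -1}) (v 1) := by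
  ext w
  constructor
  · rintro ⟨g, hg, rfl⟩
    obtain ⟨c, hc, hgv⟩ :=
      exists_mem_closure_pair_mulVec_apply_one (ρ := ρ) (by simp [hM]) (by simp [hM]) hg
    exact ⟨c, hc, hgv v⟩
  · rintro ⟨c, hc, hw⟩
    have hM_mem : M ∈ Subgroup.closure {M, -1} := Subgroup.subset_closure (by simp)
    obtain ⟨m, rfl | rfl⟩ := exists_pow_of_mem_closure_pair_neg_one hc
    · obtain ⟨k, hk⟩ := exists_pow_mulVec_eq hM hv hw
      exact ⟨M ^ k, pow_mem hM_mem k, hk⟩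
    · obtain ⟨k, hk⟩ := exists_pow_mulVec_eq hM hv (w := -w) (m := m) (by simp [hw])
      have hneg : (-1 : GL (Fin 2) (ZMod p)) ∈ Subgroup.closure {M, -1} :=
        Subgroup.subset_closure (by simp)
      refine ⟨-M ^ k, ?_, by rw [Units.val_neg, neg_mulVec, hk, neg_neg]⟩
      simpa using mul_mem hneg (pow_mem hM_mem k)

end ZMod

theorem stmt_12 (l : ℕ) (hl : l.Prime) (hlodd : Odd l)
    (ρ : (ZMod l)ˣ) (α : ℕ) (hα : orderOf ρ = α)
    (M : GL (Fin 2) (ZMod l))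
    (hM : (M : Matrix (Fin 2) (Fin 2) (ZMod l)) = !![(ρ : ZMod l), 1; 0, (ρ : ZMod l)])
    (H : Subgroup (GL (Fin 2) (ZMod l))) (hH : H = Subgroup.closure {M, -1})
    (T : Set (Fin 2 → ZMod l)) (hT : T = {v | v 1 ≠ 0}) :
    (∀ v ∈ T, Nat.card (glOrbit H v) = 2 * hFun α * l) ∧
    Nat.card {O : Set (Fin 2 → ZMod l) | ∃ v ∈ T, O = glOrbit H v} =
      (l - 1) / (2 * hFun α) := by
  subst hH hT hα
  have : Fact l.Prime := ⟨hl⟩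
  set C := Subgroup.closure ({ρ, -1} : Set (ZMod l)ˣ)
  have hord : orderOf (-1 : (ZMod l)ˣ) = 2 := by
    rw [← orderOf_units, Units.val_neg, Units.val_one, orderOf_neg_one, ZMod.ringChar_zmod_n,
      if_neg (hlodd.ne_two_of_dvd_nat dvd_rfl)]
  have hC : Nat.card C = 2 * hFun (orderOf ρ) := by
    rw [IsCyclic.card_closure_pair, hord, two_mul_hFun]
  refine ⟨fun v hv => ?_, ?_⟩
  · rw [glOrbit_closure_pair_eq hM hv, card_cosetFiber C hv, hC, Nat.card_zmod]
  · have horbits :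
        {O | ∃ v ∈ {v : Fin 2 → ZMod l | v 1 ≠ 0}, O = glOrbit (Subgroup.closure {M, -1}) v} =
          {O | ∃ v : Fin 2 → ZMod l, v 1 ≠ 0 ∧ O = cosetFiber C (v 1)} := by
      ext O
      exact exists_congr fun v => and_congr_right fun hv => by rw [glOrbit_closure_pair_eq hM hv]
    have hindex : C.index * Nat.card C = l - 1 := by
      rw [C.index_mul_card, Nat.card_eq_fintype_card, ZMod.card_units]
    rw [horbits, card_setOf_cosetFiber, ← hC, ← hindex, Nat.mul_div_cancel _ Nat.card_pos]
end
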